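/- arXiv:0811.2841 — 4 statements merged into one kernel-verified Lean document; each statement's English description precedes it below -/
import Mathlib

section
/- Suppose x is feasible and α-differentially private, and for a fixed row index i there is a column index j such that α·x_{ir} = x_{(i+1)r} for all non-Z columns r < j and x_{ir} = α·x_{(i+1)r} for all non-Z columns r > j, while at column j both strict inequalities may hold or x_{ij} = α·x_{(i+1)j}. If additionally x_{(i+1)r} = α·x_{(i+2)r} for every non-Z column r ≥ j, then Σ_{r} x_{(i+2)r} > 1, contradicting feasibility. Formally: under the stated pattern, if row i+1 of the constraint matrix has ↑'s in all columns ≥ j, then the probability constraint fails at row i+2. -/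
open Finset

/-- If rows i, i+1 of a feasible α-DP mechanism follow the pattern (↓'s before column j,
↑'s after column j, over the non-Z columns) and row i+1 of the constraint matrix has ↑'s
in all columns ≥ j, then the probability constraint fails at row i+2: Σ_r x (i+2) r > 1. -/
theorem probability_fails_at_next_row (n : ℕ) (hn : 2 ≤ n) (α : ℝ) (h0 : 0 < α) (h1 : α < 1)
    (x : ℕ → ℕ → ℝ) (i j : ℕ) (hi : i + 2 ≤ n) (hj : j ≤ n)
    (nonZ : Finset ℕ) (hsub : nonZ ⊆ range (n + 1)) (hjmem : j ∈ nonZ)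
    (hnn : ∀ k ≤ n, ∀ r ∈ nonZ, 0 ≤ x k r)
    (hsum_i : ∑ r ∈ nonZ, x i r = 1)
    (hsum_i1 : ∑ r ∈ nonZ, x (i + 1) r = 1)
    (hdown : ∀ r ∈ nonZ, r < j → x (i + 1) r = α * x i r)
    (hup : ∀ r ∈ nonZ, j < r → x i r = α * x (i + 1) r)
    (hprivj : α * x (i + 1) j ≤ x i j)
    (hlow : ∀ r ∈ nonZ, r < j → α * x (i + 1) r ≤ x (i + 2) r)
    (hge : ∀ r ∈ nonZ, j ≤ r → x (i + 2) r = x (i + 1) r / α) :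
    1 < ∑ r ∈ nonZ, x (i + 2) r := by
  classical
  set A := nonZ.filter (fun r => r < j) with hA
  set C := nonZ.filter (fun r => j < r) with hC
  have hjC : j ∉ C := by simp [hC]
  have hfilt : nonZ.filter (fun r => ¬ r < j) = insert j C := by
    ext r
    simp only [Finset.mem_filter, Finset.mem_insert, hC, not_lt]
    constructor
    · rintro ⟨hr, hle⟩
      rcases eq_or_lt_of_le hle with h | h
      · exact Or.inl h.symm
      · exact Or.inr ⟨hr, h⟩
    · rintro (rfl | ⟨hr, hlt⟩)
      · exact ⟨hjmem, le_refl _⟩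
      · exact ⟨hr, le_of_lt hlt⟩
  have hsplit : ∀ f : ℕ → ℝ, ∑ r ∈ nonZ, f r = (∑ r ∈ A, f r) + f j + ∑ r ∈ C, f r := by
    intro f
    have h1 := (Finset.sum_filter_add_sum_filter_not nonZ (fun r => r < j) f).symm
    rw [h1, hfilt, Finset.sum_insert hjC]
    ring
  have hAsub : ∀ r ∈ A, r ∈ nonZ := fun r hr => (Finset.mem_filter.mp hr).1
  have hCsub : ∀ r ∈ C, r ∈ nonZ := fun r hr => (Finset.mem_filter.mp hr).1
  set a := ∑ r ∈ A, x i r with ha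
  set b := x i j with hb
  set c := ∑ r ∈ C, x i r with hc
  set b' := x (i + 1) j with hb'
  have hα : (α : ℝ) ≠ 0 := ne_of_gt h0
  -- sums for row i+1 over A and C
  have hA1 : ∑ r ∈ A, x (i + 1) r = α * a := by
    rw [ha, Finset.mul_sum]
    exact Finset.sum_congr rfl fun r hr =>
      hdown r (hAsub r hr) (Finset.mem_filter.mp hr).2
  have hC1 : ∑ r ∈ C, x (i + 1) r = c / α := by
    rw [hc, Finset.sum_div]
    refine Finset.sum_congr rfl fun r hr => ?_
    have := hup r (hCsub r hr) (Finset.mem_filter.mp hr).2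
    field_simp [this]
    rw [this]; ring
  have e1 : a + b + c = 1 := by rw [← hsum_i, hsplit (x i)]
  have e2 : α * a + b' + c / α = 1 := by
    rw [← hsum_i1, hsplit (x (i + 1)), hA1, hC1]
  -- lower bound for row i+2
  have hA2 : α * (α * a) ≤ ∑ r ∈ A, x (i + 2) r := by
    rw [← hA1, Finset.mul_sum]
    exact Finset.sum_le_sum fun r hr =>
      hlow r (hAsub r hr) (Finset.mem_filter.mp hr).2
  have hj2 : x (i + 2) j = b' / α := hge j hjmem (le_refl _)
  have hC2 : ∑ r ∈ C, x (i + 2) r = c / α / α := by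
    rw [← hC1, Finset.sum_div]
    exact Finset.sum_congr rfl fun r hr =>
      hge r (hCsub r hr) (le_of_lt (Finset.mem_filter.mp hr).2)
  have hcnn : 0 ≤ c := by
    rw [hc]
    exact Finset.sum_nonneg fun r hr => hnn i (by omega) r (hCsub r hr)
  have hbig : α * (α * a) + b' / α + c / α / α ≤ ∑ r ∈ nonZ, x (i + 2) r := by
    rw [hsplit (x (i + 2)), hj2, hC2]
    linarith [hA2]
  have hb'nn : 0 ≤ b' := hnn (i + 1) (by omega) j hjmem
  have h2' : α ^ 2 * a + α * b' + c = α := by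
    have := e2
    field_simp at this ⊢
    nlinarith [this]
  have hub : a ≤ 1 - α + α ^ 2 * a := by linarith [hprivj]
  have hα2 : (0:ℝ) < α ^ 2 := by positivity
  have h4 : α * b' + c = α - α ^ 2 * a := by linarith [h2']
  have h3 : b' / α + c / α / α = (α * b' + c) / α ^ 2 := by
    field_simp
  have hfin : 1 < α * (α * a) + b' / α + c / α / α := by
    rw [add_assoc, h3, h4]
    rw [show α * (α * a) = α ^ 2 * a by ring]
    rw [← sub_lt_iff_lt_add']
    rw [lt_div_iff₀ hα2]
    nlinarith [mul_le_mul_of_nonneg_left hub hα2.le,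
      mul_pos h0 (mul_pos (sub_pos.mpr h1) (sub_pos.mpr h1))]
  exact lt_of_lt_of_le hfin hbig
end

section
/- Let a, b, c, b', α be reals with 0 < α < 1, a + b + c = 1, α·a + b' + c/α = 1, and α·b' ≤ b. Then α²·a + b'/α + c/α² > 1. -/
/-- Key probability-mass inequality: if a + b + c = 1, α·a + b' + c/α = 1 and α·b' ≤ b
with 0 < α < 1, then α²·a + b'/α + c/α² > 1. -/
theorem key_mass_inequality (a b c b' α : ℝ) (h0 : 0 < α) (h1 : α < 1)
    (e1 : a + b + c = 1) (e2 : α * a + b' + c / α = 1) (hb : α * b' ≤ b) :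
    1 < α ^ 2 * a + b' / α + c / α ^ 2 := by
  have hα : α ≠ 0 := ne_of_gt h0
  have e2' : α * (α * a) + α * b' + c = α := by
    field_simp at e2; linarith
  -- from hb and e1, e2': a * (1+α) ≤ 1
  have ha : a * (1 + α) ≤ 1 := by nlinarith
  have h3 : α ^ 2 * (α ^ 2 * a + b' / α + c / α ^ 2) = α ^ 4 * a + α * b' + c := by
    field_simp
  have h4 : α ^ 2 * 1 < α ^ 4 * a + α * b' + c := by
    have hk : a * α * (1 + α) ≤ α := by nlinarith
    have hkey : 0 < α * (1 - α) * (1 - a * α * (1 + α)) := by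
      apply mul_pos (mul_pos h0 (by linarith)) (by linarith)
    nlinarith [hkey]
  have := (mul_lt_mul_iff_right₀ (by positivity : (0:ℝ) < α ^ 2)).mp (h3 ▸ h4)
  exact this
end

section
/- Let w_i = Σ_{j=a}^{b} G_{ij} be the column of the mechanism induced by a deterministic remap sending outputs a,...,b of G to a single point. Then: for 0 ≤ i ≤ a-1, w_i = α·w_{i+1}; for b ≤ i ≤ n-1, w_{i+1} = α·w_i; and for a ≤ i ≤ b-1, α·w_i < w_{i+1} < (1/α)·w_i. -/
open Finset

/-- The finite-range α-geometric mechanism on {0,...,n}. -/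
noncomputable def G (n : ℕ) (α : ℝ) (i r : ℕ) : ℝ :=
  if r = 0 then α ^ i / (1 + α)
  else if r = n then α ^ (n - i) / (1 + α)
  else ((1 - α) / (1 + α)) * α ^ ((i : ℤ) - (r : ℤ)).natAbs

lemma G_pos (n : ℕ) (α : ℝ) (h0 : 0 < α) (h1 : α < 1) (i r : ℕ) : 0 < G n α i r := by
  have h2 : (0:ℝ) < 1 - α := by linarith
  have h3 : (0:ℝ) < 1 + α := by linarith
  unfold G
  split_ifs
  · exact div_pos (pow_pos h0 _) h3
  · exact div_pos (pow_pos h0 _) h3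
  · exact mul_pos (div_pos h2 h3) (pow_pos h0 _)

/-- For i < j ≤ n, G i j = α · G (i+1) j. -/
lemma G_right (n : ℕ) (α : ℝ) (i j : ℕ) (hij : i < j) (hjn : j ≤ n) :
    α * G n α (i + 1) j = G n α i j := by
  have hj0 : j ≠ 0 := by omega
  unfold G
  by_cases hc : j = n
  · rw [if_neg hj0, if_pos hc, if_neg hj0, if_pos hc]
    rw [show n - i = (n - (i + 1)) + 1 by omega, pow_succ]
    ring
  · rw [if_neg hj0, if_neg hc, if_neg hj0, if_neg hc]
    have h1 : ((i : ℤ) - (j : ℤ)).natAbs = (j - (i + 1)) + 1 := by omega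
    have h2 : (((i + 1 : ℕ) : ℤ) - (j : ℤ)).natAbs = j - (i + 1) := by
      push_cast; omega
    rw [h1, h2, pow_succ]
    ring

/-- For j ≤ i < n, G (i+1) j = α · G i j. -/
lemma G_left (n : ℕ) (α : ℝ) (i j : ℕ) (hji : j ≤ i) (hin : i < n) :
    G n α (i + 1) j = α * G n α i j := by
  have hjn : j ≠ n := by omega
  unfold G
  by_cases hj0 : j = 0
  · rw [if_pos hj0, if_pos hj0, pow_succ]
    ring
  · rw [if_neg hj0, if_neg hjn, if_neg hj0, if_neg hjn]
    have h1 : ((i : ℤ) - (j : ℤ)).natAbs = i - j := by omega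
    have h2 : (((i + 1 : ℕ) : ℤ) - (j : ℤ)).natAbs = (i - j) + 1 := by
      push_cast; omega
    rw [h1, h2, pow_succ]
    ring

/-- Structure of the column of the mechanism induced by a deterministic remap that
sends outputs a,...,b of the finite-range geometric mechanism to a single point:
with w i = Σ_{j=a}^{b} G i j, we have w i = α·w (i+1) for i < a, w (i+1) = α·w i for
b ≤ i < n, and α·w i < w (i+1) < (1/α)·w i for a ≤ i < b. -/
theorem remap_column_structure (n : ℕ) (hn : 1 ≤ n) (α : ℝ) (h0 : 0 < α) (h1 : α < 1)
    (a b : ℕ) (hab : a ≤ b) (hb : b ≤ n)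
    (w : ℕ → ℝ) (hw : ∀ i, w i = ∑ j ∈ Icc a b, G n α i j) :
    (∀ i, i < a → w i = α * w (i + 1)) ∧
    (∀ i, b ≤ i → i < n → w (i + 1) = α * w i) ∧
    (∀ i, a ≤ i → i < b → α * w i < w (i + 1) ∧ w (i + 1) < (1 / α) * w i) := by
  refine ⟨?_, ?_, ?_⟩
  · intro i hi
    rw [hw, hw, Finset.mul_sum]
    refine Finset.sum_congr rfl fun j hj => ?_
    rw [mem_Icc] at hj
    exact (G_right n α i j (by omega) (by omega)).symm
  · intro i hbi hin
    rw [hw, hw, Finset.mul_sum]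
    refine Finset.sum_congr rfl fun j hj => ?_
    rw [mem_Icc] at hj
    exact G_left n α i j (by omega) hin
  · intro i hai hib
    have hα2 : α * α < 1 := by nlinarith
    constructor
    · rw [hw, hw, Finset.mul_sum]
      apply Finset.sum_lt_sum
      · intro j hj
        rw [mem_Icc] at hj
        rcases le_or_gt j i with hji | hij
        · rw [G_left n α i j hji (by omega)]
        · rw [← G_right n α i j hij (by omega)]
          have hX := G_pos n α h0 h1 (i + 1) j
          nlinarith
      · refine ⟨b, mem_Icc.mpr ⟨hab, le_rfl⟩, ?_⟩
        rw [← G_right n α i b hib hb]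
        have hX := G_pos n α h0 h1 (i + 1) b
        nlinarith
    · rw [hw, hw, Finset.mul_sum]
      apply Finset.sum_lt_sum
      · intro j hj
        rw [mem_Icc] at hj
        rcases le_or_gt j i with hji | hij
        · rw [G_left n α i j hji (by omega)]
          have hX := G_pos n α h0 h1 i j
          rw [div_mul_eq_mul_div, le_div_iff₀ h0]
          nlinarith
        · rw [← G_right n α i j hij (by omega)]
          field_simp
          exact le_refl _
      · refine ⟨a, mem_Icc.mpr ⟨le_rfl, hab⟩, ?_⟩
        rw [G_left n α i a hai (by omega)]
        have hX := G_pos n α h0 h1 i a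
        rw [div_mul_eq_mul_div, lt_div_iff₀ h0]
        nlinarith
end

section
/- For the set of inputs {0,1}, α ∈ (0,1), a user with uniform prior (1/2, 1/2) and absolute-error loss, the truncated α-geometric mechanism has expected loss α/(1+α), while the α-Laplace mechanism (add continuous noise with density (ε/2)e^{-ε|t|} where α = e^{-ε}, then round to the nearest point of {0,1}) has expected loss √α/2. Moreover (√α/2)/(α/(1+α)) → ∞ as α → 0⁺. -/
open MeasureTheory Filter

/-- On inputs {0,1} with uniform prior and absolute-error loss, the truncated
α-geometric mechanism has expected loss α/(1+α) (the error probability on each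
input is Σ_{z≥1} ((1-α)/(1+α))α^z = α/(1+α)), while the Laplace mechanism with
density (ε/2)e^{-ε|t|}, α = e^{-ε}, remapped to the nearest of {0,1}, has expected
loss ∫_{t ≥ 1/2} (ε/2)e^{-ε|t|} dt = √α/2; and the ratio (√α/2)/(α/(1+α)) tends
to ∞ as α → 0⁺. -/
theorem laplace_vs_geometric (ε α : ℝ) (hε : 0 < ε) (hα : α = Real.exp (-ε)) :
    (∑' z : ℕ, ((1 - α) / (1 + α)) * α ^ (z + 1) = α / (1 + α)) ∧
    (∫ t in Set.Ici (1/2 : ℝ), (ε / 2) * Real.exp (-ε * |t|) = Real.sqrt α / 2) ∧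
    Tendsto (fun a : ℝ => (Real.sqrt a / 2) / (a / (1 + a)))
      (nhdsWithin 0 (Set.Ioi 0)) atTop := by
  have hα0 : 0 < α := hα ▸ Real.exp_pos _
  have hα1 : α < 1 := by
    rw [hα, Real.exp_lt_one_iff]; linarith
  refine ⟨?_, ?_, ?_⟩
  · -- geometric series
    have h : ∑' z : ℕ, ((1 - α) / (1 + α)) * α ^ (z + 1)
        = ((1 - α) / (1 + α)) * α * ∑' z : ℕ, α ^ z := by
      rw [← tsum_mul_left]
      congr 1; ext z; ring
    rw [h, tsum_geometric_of_lt_one hα0.le hα1]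
    have h1 : (1:ℝ) - α ≠ 0 := by linarith
    have h2 : (1:ℝ) + α ≠ 0 := by linarith
    field_simp
  · -- Laplace integral
    have h1 : ∫ t in Set.Ici (1/2 : ℝ), (ε / 2) * Real.exp (-ε * |t|)
        = ∫ t in Set.Ioi (1/2 : ℝ), (ε / 2) * Real.exp (-ε * |t|) :=
      integral_Ici_eq_integral_Ioi
    have h2 : ∫ t in Set.Ioi (1/2 : ℝ), (ε / 2) * Real.exp (-ε * |t|)
        = ∫ t in Set.Ioi (1/2 : ℝ), (ε / 2) * Real.exp (-(ε * t)) := by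
      refine setIntegral_congr_fun measurableSet_Ioi fun t ht => ?_
      rw [abs_of_pos (by linarith [Set.mem_Ioi.mp ht] : 0 < t)]
      ring_nf
    have h3 : ∫ t in Set.Ioi (1/2 : ℝ), Real.exp (-(ε * t))
        = ε⁻¹ * Real.exp (-(ε * (1/2))) := by
      have := integral_comp_mul_left_Ioi (fun x => Real.exp (-x)) (1/2) hε
      simpa [smul_eq_mul, integral_exp_neg_Ioi, integral_exp_Iic] using this
    rw [h1, h2, integral_const_mul, h3, hα, ← Real.exp_half]
    field_simp
  · -- ratio tends to infinity
    have hbase : Tendsto (fun a : ℝ => 2 * Real.sqrt a)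
        (nhdsWithin 0 (Set.Ioi 0)) (nhdsWithin 0 (Set.Ioi 0)) := by
      rw [tendsto_nhdsWithin_iff]
      constructor
      · have := (Real.continuous_sqrt.tendsto 0).const_mul 2
        simpa using this.mono_left nhdsWithin_le_nhds
      · filter_upwards [self_mem_nhdsWithin] with a ha
        exact Set.mem_Ioi.mpr (by have := Real.sqrt_pos.mpr (Set.mem_Ioi.mp ha); positivity)
    have key : Tendsto (fun a : ℝ => (2 * Real.sqrt a)⁻¹)
        (nhdsWithin 0 (Set.Ioi 0)) atTop := hbase.inv_tendsto_nhdsGT_zero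
    refine tendsto_atTop_mono' _ ?_ key
    filter_upwards [self_mem_nhdsWithin] with a ha
    have ha0 : (0:ℝ) < a := ha
    have hs : 0 < Real.sqrt a := Real.sqrt_pos.mpr ha0
    have hsq : Real.sqrt a * Real.sqrt a = a := Real.mul_self_sqrt ha0.le
    have : (Real.sqrt a / 2) / (a / (1 + a)) = (1 + a) / (2 * Real.sqrt a) := by
      field_simp
      nlinarith [hsq, hs]
    rw [this, inv_eq_one_div]
    gcongr
    linarith
end
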